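/- For positive integers k₁, l₁, l₂, p, nonnegative integers r₁, s₁, s₂, and r with r ≥ 0, one has z_p^r ⋆_t z_{l₁} z_p^{s₁} z_{l₂} z_p^{s₂} = Σ_{i=0}^{r} { z_p^i z_{l₁} + (1−2t) z_p^{i−1} z_{l₁+p} + (t²−t) z_p^{i−1} x^{l₁+p} } (z_p^{r−i} ⋆_t z_p^{s₁} z_{l₂} z_p^{s₂}), where by convention z_p^{−1} = 0. -/
import Mathlib


/- ℍ_t = ℚ[t]⟨x,y⟩, z_k = x^{k-1}y, and the t-stuffle product ⋆_t on the word
basis of ℍ¹_t (a ℚ[t]-bilinear map is determined by its values on words). -/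

noncomputable section

open Polynomial Finset

abbrev R : Type := Polynomial ℚ
abbrev A : Type := FreeAlgebra R Bool

def Xg : A := FreeAlgebra.ι R false
def Yg : A := FreeAlgebra.ι R true
def tp : R := Polynomial.X

/-- `z k = x^(k-1) y`. -/
def z (k : ℕ) : A := Xg ^ (k - 1) * Yg

/-- The word `z_{k₁} ⋯ z_{kₙ}`. -/
def zw (w : List ℕ) : A := (w.map z).prod

/-- The t-stuffle product, given on the word basis of ℍ¹_t. -/
def tst : List ℕ → List ℕ → A
  | [], w => zw w
  | k :: w₁, [] => zw (k :: w₁)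
  | k :: w₁, l :: w₂ =>
      z k * tst w₁ (l :: w₂) + z l * tst (k :: w₁) w₂
        + (1 - 2 * tp) • (z (k + l) * tst w₁ w₂)
        + (if w₁ = [] ∧ w₂ = [] then (0 : R) else tp ^ 2 - tp) • (Xg ^ (k + l) * tst w₁ w₂)
  termination_by w₁ w₂ => w₁.length + w₂.length



lemma zw_nil : zw [] = 1 := rfl

lemma zw_cons (a : ℕ) (w : List ℕ) : zw (a :: w) = z a * zw w := by simp [zw]

lemma tst_nil (w : List ℕ) : tst [] w = zw w := by simp [tst]

lemma tst_cons (k l : ℕ) (w₁ w₂ : List ℕ) :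
    tst (k :: w₁) (l :: w₂) =
      z k * tst w₁ (l :: w₂) + z l * tst (k :: w₁) w₂
        + (1 - 2 * tp) • (z (k + l) * tst w₁ w₂)
        + (if w₁ = [] ∧ w₂ = [] then (0 : R) else tp ^ 2 - tp) • (Xg ^ (k + l) * tst w₁ w₂) := by
  rw [tst]

/-- for positive `k₁, l₁, l₂, p` and nonnegative `r₁, s₁, s₂, r`,
`z_p^r ⋆_t z_{l₁} z_p^{s₁} z_{l₂} z_p^{s₂}
  = Σ_{i=0}^r {z_p^i z_{l₁} + (1-2t) z_p^{i-1} z_{l₁+p} + (t²-t) z_p^{i-1} x^{l₁+p}}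
      (z_p^{r-i} ⋆_t z_p^{s₁} z_{l₂} z_p^{s₂})`, with the convention `z_p^{-1} = 0`. -/
theorem eq3012 (l₁ l₂ p r s₁ s₂ : ℕ) (hl₁ : 1 ≤ l₁) (hl₂ : 1 ≤ l₂) (hp : 1 ≤ p) :
    tst (List.replicate r p) (l₁ :: (List.replicate s₁ p ++ l₂ :: List.replicate s₂ p)) =
      ∑ i ∈ Finset.range (r + 1),
        (zw (List.replicate i p) * z l₁
          + (if i = 0 then (0 : A)
             else (1 - 2 * tp) • (zw (List.replicate (i - 1) p) * z (l₁ + p)))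
          + (if i = 0 then (0 : A)
             else (tp ^ 2 - tp) • (zw (List.replicate (i - 1) p) * Xg ^ (l₁ + p))))
        * tst (List.replicate (r - i) p)
            (List.replicate s₁ p ++ l₂ :: List.replicate s₂ p) := by
  set W : List ℕ := List.replicate s₁ p ++ l₂ :: List.replicate s₂ p with hW
  have hWne : W ≠ [] := by cases s₁ <;> simp [hW, List.replicate_succ]
  induction r with
  | zero => simp [tst_nil, zw_cons, zw_nil]
  | succ r ih =>
    have key : ∀ i ∈ Finset.range (r + 1),
        (zw (List.replicate (i + 1) p) * z l₁
          + (1 - 2 * tp) • (zw (List.replicate i p) * z (l₁ + p))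
          + (tp ^ 2 - tp) • (zw (List.replicate i p) * Xg ^ (l₁ + p)))
        * tst (List.replicate (r - i) p) W =
        z p * ((zw (List.replicate i p) * z l₁
          + (if i = 0 then (0 : A)
             else (1 - 2 * tp) • (zw (List.replicate (i - 1) p) * z (l₁ + p)))
          + (if i = 0 then (0 : A)
             else (tp ^ 2 - tp) • (zw (List.replicate (i - 1) p) * Xg ^ (l₁ + p))))
          * tst (List.replicate (r - i) p) W)
        + (if i = 0 then
            (1 - 2 * tp) • (z (l₁ + p) * tst (List.replicate r p) W)
            + (tp ^ 2 - tp) • (Xg ^ (l₁ + p) * tst (List.replicate r p) W)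
           else 0) := by
      intro i _
      rcases i with _ | j
      · simp only [reduceIte, add_zero, List.replicate_zero, List.replicate_succ,
          zw_cons, zw_nil, mul_one, one_mul, mul_add, add_mul, smul_mul_assoc,
          mul_smul_comm, mul_assoc, zero_mul, mul_zero]
        abel
      · simp only [Nat.succ_sub_one, Nat.succ_ne_zero, if_neg, reduceIte, add_zero]
        rw [List.replicate_succ (n := j + 1), zw_cons, List.replicate_succ (n := j), zw_cons]
        simp only [mul_add, add_mul, smul_mul_assoc, mul_smul_comm, mul_assoc]
    rw [List.replicate_succ, tst_cons, if_neg (by simp [hWne]), ← List.replicate_succ]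
    conv_rhs => rw [Finset.sum_range_succ']
    rw [ih, Finset.mul_sum]
    simp only [Nat.succ_sub_succ, Nat.sub_zero, Nat.add_eq_zero, one_ne_zero, and_false,
      if_false, reduceIte, Nat.add_sub_cancel, List.replicate_zero, zw_nil, one_mul, add_zero]
    rw [Finset.sum_congr rfl key, Finset.sum_add_distrib,
      Finset.sum_ite_eq' (Finset.range (r + 1)) 0]
    simp only [Finset.mem_range, Nat.succ_pos, if_pos]
    rw [Nat.add_comm p l₁]
    abel
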